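/- Let F be a nonempty finite set of binary vectors of length n ≥ 1 (a finite set of functions from Fin n to Bool, representing a binary matrix with distinct rows). If the recursive algorithm A₁ applied to F returns true, then F contains at least one heavy column, i.e., there exists a column index k with 2 · |{r ∈ F : r k = true}| ≥ |F|. -/

import Mathlib

/-- The reduction `F_k^{b−}`: take all rows `r ∈ F` with `r k = b` and delete
coordinate `k`. Deletion is injective on such rows since they all agree at
position `k`. -/
def reduceMat {n : ℕ} (k : Fin (n + 1)) (b : Bool)
    (F : Finset (Fin (n + 1) → Bool)) : Finset (Fin n → Bool) :=
  (F.filter (fun r => r k = b)).image (fun r => fun i => r (k.succAbove i))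

/-- Every column of `K` has strictly more zeros than ones. -/
def allColsMoreZeros {n : ℕ} (K : Finset (Fin n → Bool)) : Prop :=
  ∀ j : Fin n, 2 * (K.filter (fun r => r j = true)).card < K.card

instance {n : ℕ} (K : Finset (Fin n → Bool)) : Decidable (allColsMoreZeros K) := by
  unfold allColsMoreZeros; infer_instance

/-- Algorithm `A₁` on a matrix with `n + 1` columns, given as a finite set of
distinct rows. For `n + 1 = 1` columns it returns `true` iff the single column
is heavy. Otherwise it returns `true` iff for every column `k` and every
nonempty reduction `K ∈ S_k = {F_k^{0−}, F_k^{1−}}`, it is not the case that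
every column of `K` has strictly more zeros than ones (which would make the
algorithm return `false`), and the recursive call `A₁ K` returns `true`
(any `false` from a recursive call is propagated). The order of processing
does not affect the returned value, since `true` is only returned after all
columns are processed. -/
def A1 : (n : ℕ) → Finset (Fin (n + 1) → Bool) → Bool
  | 0, F => decide (F.card ≤ 2 * (F.filter (fun r => r 0 = true)).card)
  | n + 1, F =>
      decide (∀ k : Fin (n + 2), ∀ b : Bool, (reduceMat k b F).Nonempty →
        ¬ allColsMoreZeros (reduceMat k b F) ∧ A1 n (reduceMat k b F) = true)

/-
Acceptance by `A₁` forces `F` to be closed under setting any single entry of a row to one.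
For one column this is exactly the heaviness test. With more columns, to flip entry `j` of
`r ∈ F` pick a column `k ≠ j`: the reduction of `F` at `(k, r k)` contains `r` with column `k`
deleted and is accepted by `A₁`, so by induction it contains the flipped row, and reinserting
`r k` puts the flipped row back into `F`. Then `r ↦ update r k true` injects the rows with a
zero in column `k` into those with a one, so every column of `F` is heavy.
-/

lemma mem_reduceMat_iff {n : ℕ} {k : Fin (n + 1)} {b : Bool} {F : Finset (Fin (n + 1) → Bool)}
    {s : Fin n → Bool} : s ∈ reduceMat k b F ↔ k.insertNth b s ∈ F := by
  constructor
  · intro hs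
    obtain ⟨r, hr, rfl⟩ := Finset.mem_image.mp hs
    rw [Finset.mem_filter] at hr
    rw [← hr.2]
    exact (Fin.insertNth_self_removeNth k r).symm ▸ hr.1
  · intro hs
    refine Finset.mem_image.mpr ⟨k.insertNth b s, Finset.mem_filter.mpr ⟨hs, by simp⟩, ?_⟩
    funext i
    simp

lemma update_true_mem_of_A1 {n : ℕ} {F : Finset (Fin (n + 1) → Bool)} (hA : A1 n F = true)
    {r : Fin (n + 1) → Bool} (hr : r ∈ F) (j : Fin (n + 1)) :
    Function.update r j true ∈ F := by
  induction n with
  | zero =>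
    have hheavy : F.card ≤ 2 * (F.filter (fun r => r 0 = true)).card := by
      simpa [A1] using hA
    obtain ⟨s, hs, hs0⟩ : ∃ s ∈ F, s 0 = true := by
      by_contra! hnone
      rw [Finset.filter_false_of_mem (by simpa using hnone)] at hheavy
      exact Finset.card_ne_zero_of_mem hr (by simpa using hheavy)
    convert hs
    funext i
    rw [Fin.fin_one_eq_zero i, Fin.fin_one_eq_zero j, Function.update_self, hs0]
  | succ n ih =>
    simp only [A1, decide_eq_true_eq] at hA
    obtain ⟨k, hkj⟩ := exists_ne j
    obtain ⟨j', rfl⟩ := Fin.exists_succAbove_eq hkj.symm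
    have hrK : k.removeNth r ∈ reduceMat k (r k) F := by
      rw [mem_reduceMat_iff, Fin.insertNth_self_removeNth]
      exact hr
    have hflip := mem_reduceMat_iff.mp (ih (hA k (r k) ⟨_, hrK⟩).2 hrK j')
    rwa [Fin.insertNth_update, Fin.insertNth_self_removeNth] at hflip

lemma card_filter_false_le_card_filter_true {ι : Type*} [DecidableEq ι] {F : Finset (ι → Bool)}
    (k : ι) (hF : ∀ r ∈ F, Function.update r k true ∈ F) :
    (F.filter (fun r => r k = false)).card ≤ (F.filter (fun r => r k = true)).card := by
  refine Finset.card_le_card_of_injOn (fun r => Function.update r k true) ?_ ?_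
  · intro r hr
    rw [Finset.mem_coe, Finset.mem_filter] at hr ⊢
    exact ⟨hF r hr.1, Function.update_self _ _ _⟩
  · intro r hr s hs hrs
    rw [Finset.mem_coe, Finset.mem_filter] at hr hs
    rw [← Function.update_eq_self k r, ← Function.update_eq_self k s, hr.2, hs.2]
    simpa using congrArg (Function.update · k false) hrs

lemma card_le_two_mul_card_filter_true {ι : Type*} [DecidableEq ι] {F : Finset (ι → Bool)}
    (k : ι) (hF : ∀ r ∈ F, Function.update r k true ∈ F) :
    F.card ≤ 2 * (F.filter (fun r => r k = true)).card := by
  have hsplit := Finset.card_filter_add_card_filter_not (s := F) (fun r => r k = true)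
  simp only [Bool.not_eq_true] at hsplit
  have := card_filter_false_le_card_filter_true k hF
  omega

theorem stmt_6_general {n : ℕ} (F : Finset (Fin (n + 1) → Bool))
    (h : A1 n F = true) :
    ∃ k : Fin (n + 1), F.card ≤ 2 * (F.filter (fun r => r k = true)).card :=
  ⟨0, card_le_two_mul_card_filter_true 0 fun _ hr => update_true_mem_of_A1 h hr 0⟩

/-- Theorem 1: if `F` is a nonempty finite set of distinct
binary vectors of length `n + 1 ≥ 1` and algorithm `A₁` returns `true` on `F`,
then `F` has a heavy column: some `k` with `2 * |{r ∈ F : r k = true}| ≥ |F|`. -/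
theorem stmt_6 {n : ℕ} (F : Finset (Fin (n + 1) → Bool)) (hne : F.Nonempty)
    (h : A1 n F = true) :
    ∃ k : Fin (n + 1), F.card ≤ 2 * (F.filter (fun r => r k = true)).card :=
  stmt_6_general F h
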